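/- arXiv:1910.08490 — 3 statements merged into one kernel-verified Lean document; each statement's English description precedes it below -/
import Mathlib

section
/- If f_j ⇉ f uniformly on T, then for every ε > 0 and every ε'' > ε: V_{ε''}(f,T) ≤ liminf_{j→∞} V_ε(f_j,T). -/
open Filter Set
open scoped ENNReal Topology

/-- The approximate (ε-)variation: infimum of Jordan variations of functions of
bounded variation uniformly ε-close to `f` on `T` (⊤ if no such function). -/
noncomputable def approxVar {M : Type*} [MetricSpace M] (f : ℝ → M) (T : Set ℝ) (ε : ℝ) : ℝ≥0∞ :=
  ⨅ (g : ℝ → M) (_ : eVariationOn g T ≠ ⊤ ∧ ∀ t ∈ T, dist (f t) (g t) ≤ ε),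
    eVariationOn g T

/-- The oscillation (diameter of the image) of `f` on `T`, valued in `[0,∞]`. -/
noncomputable def oscOn {M : Type*} [MetricSpace M] (f : ℝ → M) (T : Set ℝ) : ℝ≥0∞ :=
  ⨆ s ∈ T, ⨆ t ∈ T, edist (f s) (f t)

theorem approxVar_add_le_of_dist_le {M : Type*} [MetricSpace M] {f h : ℝ → M} {T : Set ℝ}
    {δ ε : ℝ} (hfh : ∀ t ∈ T, dist (f t) (h t) ≤ δ) :
    approxVar f T (δ + ε) ≤ approxVar h T ε :=
  le_iInf₂ fun g hg => iInf₂_le g ⟨hg.1, fun t ht =>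
    (dist_triangle _ (h t) _).trans (add_le_add (hfh t ht) (hg.2 t ht))⟩

theorem approxVar_le_liminf_general {M : Type*} [MetricSpace M]
    (T : Set ℝ) (f : ℝ → M) (fj : ℕ → ℝ → M)
    (huc : TendstoUniformlyOn fj f atTop T)
    {ε ε'' : ℝ} (hεε'' : ε < ε'') :
    approxVar f T ε'' ≤ Filter.liminf (fun j => approxVar (fj j) T ε) Filter.atTop := by
  have hclose : ∀ᶠ j in atTop, ∀ t ∈ T, dist (f t) (fj j t) < ε'' - ε :=
    Metric.tendstoUniformlyOn_iff.1 huc _ (sub_pos.2 hεε'')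
  refine le_liminf_of_le (by isBoundedDefault) (hclose.mono fun j hj => ?_)
  simpa using approxVar_add_le_of_dist_le (ε := ε) fun t ht => (hj t ht).le

theorem approxVar_le_liminf {M : Type*} [MetricSpace M]
    (T : Set ℝ) (hT : T.Nonempty) (f : ℝ → M) (fj : ℕ → ℝ → M)
    (huc : TendstoUniformlyOn fj f atTop T)
    {ε ε'' : ℝ} (hε : 0 < ε) (hεε'' : ε < ε'') :
    approxVar f T ε'' ≤ Filter.liminf (fun j => approxVar (fj j) T ε) Filter.atTop :=
  approxVar_le_liminf_general T f fj huc hεε''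
end

section
/- If (M,d) is a proper metric space (closed bounded sets are compact), then ε ↦ V_ε(f,T) is right-continuous on (0,∞): V_ε(f,T) = lim_{ε'→ε⁺} V_{ε'}(f,T). -/
open Filter Set
open scoped ENNReal Topology

/-!
Since `approxVar f T` is antitone, its right limit at `ε` is `L = sup_{ε' > ε} V_{ε'}` and always
`V_ε ≥ L`. For the converse, take `ε_n ↓ ε` and `g_n` admissible at level `ε_n` with variation
below `L + η`. In a proper space the values `g_n t` stay in the compact ball of radius `ε_0`
around `f t`, so the `g_n` converge pointwise on `T` along an ultrafilter; the limit is `ε`-close to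
`f` and, by lower semicontinuity of the variation, has variation at most `L + η`.
-/

lemma eVariationOn_le_of_tendsto {ι α E : Type*} [LinearOrder α] [PseudoEMetricSpace E]
    {l : Filter ι} [l.NeBot] {g : ι → α → E} {G : α → E} {s : Set α}
    (hG : ∀ x ∈ s, Tendsto (g · x) l (𝓝 (G x))) {C : ℝ≥0∞}
    (hC : ∀ᶠ i in l, eVariationOn (g i) s ≤ C) :
    eVariationOn G s ≤ C := by
  by_contra! h
  obtain ⟨i, hlt, hle⟩ := ((eVariationOn.lowerSemicontinuous_aux hG h).and hC).exists
  exact hlt.not_ge hle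

lemma Ultrafilter.exists_forall_tendsto_of_isCompact {ι α X : Type*} [TopologicalSpace X]
    (u : Ultrafilter ι) {g : ι → α → X} {s : Set α}
    (hK : ∀ x ∈ s, ∃ K, IsCompact K ∧ ∀ i, g i x ∈ K) :
    ∃ G : α → X, ∀ x ∈ s, Tendsto (g · x) u (𝓝 (G x)) := by
  obtain ⟨i₀, -⟩ := (u : Filter ι).nonempty_of_mem univ_mem
  have hlim : ∀ x, ∃ y, x ∈ s → Tendsto (g · x) u (𝓝 y) := fun x => by
    by_cases hx : x ∈ s
    · obtain ⟨K, hK, hgK⟩ := hK x hx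
      obtain ⟨y, -, hy⟩ := hK.ultrafilter_le_nhds (u.map (g · x))
        (by rw [Ultrafilter.coe_map, le_principal_iff]; exact mem_map.2 (univ_mem' hgK))
      exact ⟨y, fun _ => hy⟩
    · exact ⟨g i₀ x, fun h => absurd h hx⟩
  choose G hG using hlim
  exact ⟨G, hG⟩

section approxVar

variable {M : Type*} [MetricSpace M] (f : ℝ → M) (T : Set ℝ)

lemma approxVar_antitone : Antitone (approxVar f T) := fun _ _ hab =>
  le_iInf₂ fun g hg => iInf₂_le g ⟨hg.1, fun t ht => (hg.2 t ht).trans hab⟩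

variable {f T}

lemma approxVar_le {ε : ℝ} {g : ℝ → M} (hg : eVariationOn g T ≠ ⊤)
    (hfg : ∀ t ∈ T, dist (f t) (g t) ≤ ε) : approxVar f T ε ≤ eVariationOn g T :=
  iInf₂_le g ⟨hg, hfg⟩

lemma exists_eVariationOn_lt_of_approxVar_lt {ε : ℝ} {c : ℝ≥0∞} (h : approxVar f T ε < c) :
    ∃ g : ℝ → M, (∀ t ∈ T, dist (f t) (g t) ≤ ε) ∧ eVariationOn g T < c := by
  simp only [approxVar, iInf_lt_iff] at h
  obtain ⟨g, hg, hlt⟩ := h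
  exact ⟨g, hg.2, hlt⟩

lemma approxVar_le_of_forall_gt [ProperSpace M] {ε : ℝ} {L : ℝ≥0∞}
    (hL : ∀ ε' > ε, approxVar f T ε' ≤ L) : approxVar f T ε ≤ L := by
  refine ENNReal.le_of_forall_pos_le_add fun η hη hL_lt => ?_
  obtain ⟨e, e_anti, e_gt, e_lim⟩ := exists_seq_strictAnti_tendsto ε
  have hlt : ∀ n, approxVar f T (e n) < L + η := fun n =>
    (hL _ (e_gt n)).trans_lt (ENNReal.lt_add_right hL_lt.ne (by exact_mod_cast hη.ne'))
  choose g hg_close hg_var using fun n => exists_eVariationOn_lt_of_approxVar_lt (hlt n)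
  obtain ⟨u, hu⟩ := Ultrafilter.exists_le (atTop : Filter ℕ)
  obtain ⟨G, hG⟩ := u.exists_forall_tendsto_of_isCompact (g := g) (s := T) fun t ht =>
    ⟨Metric.closedBall (f t) (e 0), isCompact_closedBall _ _, fun n =>
      Metric.mem_closedBall'.2 ((hg_close n t ht).trans (e_anti.antitone (Nat.zero_le n)))⟩
  have hG_var : eVariationOn G T ≤ L + η :=
    eVariationOn_le_of_tendsto hG (Eventually.of_forall fun n => (hg_var n).le)
  have hG_close : ∀ t ∈ T, dist (f t) (G t) ≤ ε := fun t ht =>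
    le_of_tendsto_of_tendsto' (tendsto_const_nhds.dist (hG t ht)) (e_lim.mono_left hu)
      fun n => hg_close n t ht
  exact (approxVar_le (ne_top_of_le_ne_top (by simpa using hL_lt.ne) hG_var) hG_close).trans
    hG_var

end approxVar

theorem approxVar_right_continuous_general {M : Type*} [MetricSpace M] [ProperSpace M]
    (f : ℝ → M) (T : Set ℝ) {ε : ℝ} :
    Tendsto (fun ε' => approxVar f T ε') (𝓝[>] ε) (𝓝 (approxVar f T ε)) := by
  have hlim := (approxVar_antitone f T).tendsto_nhdsGT ε
  have hsup : sSup (approxVar f T '' Ioi ε) = approxVar f T ε :=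
    le_antisymm (sSup_le (forall_mem_image.2 fun _ hx => approxVar_antitone f T (le_of_lt hx)))
      (approxVar_le_of_forall_gt fun _ hε' => le_sSup (mem_image_of_mem _ hε'))
  rwa [hsup] at hlim

theorem approxVar_right_continuous {M : Type*} [MetricSpace M] [ProperSpace M]
    (f : ℝ → M) (T : Set ℝ) (hT : T.Nonempty) {ε : ℝ} (hε : 0 < ε) :
    Tendsto (fun ε' => approxVar f T ε') (𝓝[>] ε) (𝓝 (approxVar f T ε)) :=
  approxVar_right_continuous_general f T
end

section
/- (Pointwise selection principle) Let T ⊆ ℝ be nonempty, (M,d) a metric space, and f_j : T → M a sequence such that for each t ∈ T the set {f_j(t) : j ∈ ℕ} has compact closure in M, and limsup_{j→∞} V_ε(f_j,T) < ∞ for all ε > 0. Then some subsequence of (f_j) converges pointwise on T to a bounded function f : T → M. -/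
/-!
Replace each `f n` by a function `g k n` of variation at most `C k` which is `1/(k+1)`-close to
it for large `n`. The variation functions `t ↦ V(g k n, T ∩ (-∞, t])` are monotone and uniformly
bounded in `n`, so by Helly's theorem (for all `k` at once) along a subsequence they converge
pointwise, to `V k`. Take a countable `S ⊆ T` with `V k '' S` dense in `V k '' T` for every `k`,
and extract further so that `f n` converges on `S`. For `t ∈ T` and `s ∈ S` with `V k s` close
to `V k t`, the distance of `f n t` and `f n s` is eventually at most
`2/(k+1) + |V k t - V k s| + o(1)`, so `(f n t)` is Cauchy, and it converges in the compact
closure of its range. The approximation for `ε = 1` bounds the oscillation of the limit.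
-/

open Filter Set
open scoped ENNReal NNReal Topology

theorem exists_strictMono_forall_tendsto_of_mem_isCompact {ι X : Type*} [Countable ι]
    [TopologicalSpace X] [FirstCountableTopology X] (u : ℕ → ι → X) {K : ι → Set X}
    (hK : ∀ i, IsCompact (K i)) (hu : ∀ n i, u n i ∈ K i) :
    ∃ φ : ℕ → ℕ, StrictMono φ ∧ ∀ i, ∃ a, Tendsto (fun n => u (φ n) i) atTop (𝓝 a) := by
  obtain ⟨a, -, φ, hφ, ha⟩ := (isCompact_univ_pi hK).tendsto_subseq fun n i _ => hu n i
  exact ⟨φ, hφ, fun i => ⟨a i, tendsto_pi_nhds.1 ha i⟩⟩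

theorem exists_countable_subset_image_subset_closure {X Y : Type*} [PseudoMetricSpace Y]
    [TopologicalSpace.SeparableSpace Y] (F : X → Y) (T : Set X) :
    ∃ S ⊆ T, S.Countable ∧ F '' T ⊆ closure (F '' S) := by
  obtain ⟨D, hDT, hDc, hTD⟩ :=
    (TopologicalSpace.IsSeparable.of_separableSpace (F '' T)).exists_countable_dense_subset
  have hpre : ∀ y : D, ∃ x ∈ T, F x = y := fun y => hDT y.2
  choose σ hσT hσ using hpre
  have := hDc.to_subtype
  refine ⟨range σ, range_subset_iff.2 hσT, countable_range σ, hTD.trans (closure_mono ?_)⟩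
  rintro y hy
  exact ⟨σ ⟨y, hy⟩, mem_range_self _, hσ _⟩

theorem exists_countable_subset_forall_image_subset_closure {κ X Y : Type*} [Countable κ]
    [PseudoMetricSpace Y] [TopologicalSpace.SeparableSpace Y] (F : κ → X → Y) (T : Set X) :
    ∃ S ⊆ T, S.Countable ∧ ∀ k, F k '' T ⊆ closure (F k '' S) := by
  choose S hST hSc hS using fun k => exists_countable_subset_image_subset_closure (F k) T
  refine ⟨⋃ k, S k, iUnion_subset hST, countable_iUnion hSc, fun k => (hS k).trans ?_⟩
  exact closure_mono (image_mono (subset_iUnion S k))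

theorem cauchySeq_of_forall_eventually_dist_lt {M : Type*} [PseudoMetricSpace M] {x : ℕ → M}
    (h : ∀ η > 0, ∃ y : ℕ → M, CauchySeq y ∧ ∀ᶠ n in atTop, dist (x n) (y n) < η) :
    CauchySeq x := by
  refine Metric.cauchySeq_iff.2 fun η hη => ?_
  obtain ⟨y, hy, hxy⟩ := h (η / 3) (by positivity)
  obtain ⟨N₁, hN₁⟩ := Metric.cauchySeq_iff.1 hy (η / 3) (by positivity)
  obtain ⟨N₂, hN₂⟩ := eventually_atTop.1 hxy
  refine ⟨max N₁ N₂, fun m hm n hn => ?_⟩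
  calc dist (x m) (x n) ≤ dist (x m) (y m) + dist (y m) (y n) + dist (y n) (x n) :=
        dist_triangle4 _ _ _ _
    _ < η / 3 + η / 3 + η / 3 := by
        rw [dist_comm (y n)]
        gcongr
        exacts [hN₂ m (le_of_max_le_right hm),
          hN₁ m (le_of_max_le_left hm) n (le_of_max_le_left hn), hN₂ n (le_of_max_le_right hn)]
    _ = η := by ring

noncomputable def ratEnvelope (w : ℚ → ℝ) (t : ℝ) : ℝ :=
  sSup (w '' {q : ℚ | (q : ℝ) < t})

section ratEnvelope

variable {w : ℚ → ℝ}

theorem le_ratEnvelope (hw : BddAbove (range w)) {q : ℚ} {t : ℝ} (hq : (q : ℝ) < t) :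
    w q ≤ ratEnvelope w t :=
  le_csSup (hw.mono (image_subset_range _ _)) ⟨q, hq, rfl⟩

theorem exists_lt_of_lt_ratEnvelope {a t : ℝ} (ha : a < ratEnvelope w t) :
    ∃ q : ℚ, (q : ℝ) < t ∧ a < w q := by
  obtain ⟨q₀, hq₀⟩ := exists_rat_lt t
  obtain ⟨_, ⟨q, hq, rfl⟩, h⟩ :=
    exists_lt_of_lt_csSup (s := w '' {q : ℚ | (q : ℝ) < t}) ⟨w q₀, q₀, hq₀, rfl⟩ ha
  exact ⟨q, hq, h⟩

theorem ratEnvelope_mono (hw : BddAbove (range w)) : Monotone (ratEnvelope w) := by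
  intro s t hst
  obtain ⟨q, hq⟩ := exists_rat_lt s
  exact csSup_le_csSup (hw.mono (image_subset_range _ _)) ⟨w q, q, hq, rfl⟩
    (image_mono fun q hq => lt_of_lt_of_le hq hst)

theorem tendsto_ratEnvelope_of_continuousAt {u : ℕ → ℝ → ℝ} (hu : ∀ n, Monotone (u n))
    (hw : ∀ q : ℚ, Tendsto (fun n => u n q) atTop (𝓝 (w q))) (hwb : BddAbove (range w)) {t : ℝ}
    (ht : ContinuousAt (ratEnvelope w) t) :
    Tendsto (fun n => u n t) atTop (𝓝 (ratEnvelope w t)) := by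
  refine tendsto_order.2 ⟨fun a ha => ?_, fun b hb => ?_⟩
  · obtain ⟨q, hqt, haq⟩ := exists_lt_of_lt_ratEnvelope ha
    filter_upwards [(hw q).eventually (lt_mem_nhds haq)] with n hn
    exact hn.trans_le (hu n hqt.le)
  · obtain ⟨t', htt', ht'b⟩ := (ht.eventually (gt_mem_nhds hb)).exists_gt
    obtain ⟨q, htq, hqt'⟩ := exists_rat_btwn htt'
    filter_upwards [(hw q).eventually (gt_mem_nhds ((le_ratEnvelope hwb hqt').trans_lt ht'b))]
      with n hn
    exact (hu n htq.le).trans_lt hn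

end ratEnvelope

theorem exists_strictMono_forall_tendsto_of_monotone {κ : Type*} [Countable κ]
    (u : ℕ → κ → ℝ → ℝ) (hu : ∀ n k, Monotone (u n k)) (R : κ → ℝ)
    (hR : ∀ n k t, |u n k t| ≤ R k) :
    ∃ φ : ℕ → ℕ, StrictMono φ ∧ ∀ k t, ∃ a, Tendsto (fun n => u (φ n) k t) atTop (𝓝 a) := by
  have hmem : ∀ n k t, u n k t ∈ Icc (-R k) (R k) := fun n k t => abs_le.1 (hR n k t)
  obtain ⟨φ₁, hφ₁, hrat⟩ := exists_strictMono_forall_tendsto_of_mem_isCompact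
    (fun n (p : κ × ℚ) => u n p.1 p.2) (fun _ => isCompact_Icc) fun n p => hmem n p.1 p.2
  choose w hw using hrat
  have hwb : ∀ k, BddAbove (range fun q => w (k, q)) := fun k => by
    refine ⟨R k, ?_⟩
    rintro _ ⟨q, rfl⟩
    exact (isClosed_Icc.mem_of_tendsto (hw (k, q)) (.of_forall fun n => hmem _ k q)).2
  -- The envelopes are monotone, hence have countably many jumps; a second extraction takes
  -- care of those points.
  have hjumps : ∀ k, {t | ¬ContinuousAt (ratEnvelope fun q => w (k, q)) t}.Countable :=
    fun k => (ratEnvelope_mono (hwb k)).countable_not_continuousAt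
  have := fun k => (hjumps k).to_subtype
  obtain ⟨φ₂, hφ₂, hjump⟩ := exists_strictMono_forall_tendsto_of_mem_isCompact
    (fun n (p : Σ k, {t | ¬ContinuousAt (ratEnvelope fun q => w (k, q)) t}) => u (φ₁ n) p.1 p.2)
    (fun _ => isCompact_Icc) fun n p => hmem _ p.1 p.2
  refine ⟨φ₁ ∘ φ₂, hφ₁.comp hφ₂, fun k t => ?_⟩
  by_cases ht : ContinuousAt (ratEnvelope fun q => w (k, q)) t
  · exact ⟨_, (tendsto_ratEnvelope_of_continuousAt (fun n => hu (φ₁ n) k) (fun q => hw (k, q))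
      (hwb k) ht).comp hφ₂.tendsto_atTop⟩
  · exact hjump ⟨k, t, ht⟩

noncomputable def variationFunction {α E : Type*} [LinearOrder α] [PseudoEMetricSpace E]
    (g : α → E) (T : Set α) (t : α) : ℝ :=
  (eVariationOn g (T ∩ Iic t)).toReal

section variationFunction

variable {α E : Type*} [LinearOrder α] [PseudoMetricSpace E] {g : α → E} {T : Set α}

theorem abs_variationFunction_le (hg : eVariationOn g T ≠ ∞) (t : α) :
    |variationFunction g T t| ≤ (eVariationOn g T).toReal := by
  rw [variationFunction, abs_of_nonneg ENNReal.toReal_nonneg]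
  exact ENNReal.toReal_mono hg (eVariationOn.mono g inter_subset_left)

theorem monotone_variationFunction (hg : eVariationOn g T ≠ ∞) :
    Monotone (variationFunction g T) := fun _ _ hst =>
  ENNReal.toReal_mono (ne_top_of_le_ne_top hg (eVariationOn.mono g inter_subset_left))
    (eVariationOn.mono g (inter_subset_inter_right T (Iic_subset_Iic.2 hst)))

theorem eVariationOn_inter_Iic_add_edist_le {s t : α} (hs : s ∈ T) (ht : t ∈ T) (hst : s ≤ t) :
    eVariationOn g (T ∩ Iic s) + edist (g s) (g t) ≤ eVariationOn g (T ∩ Iic t) :=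
  calc eVariationOn g (T ∩ Iic s) + edist (g s) (g t)
      ≤ eVariationOn g (T ∩ Iic s) + eVariationOn g (T ∩ Icc s t) := by
        gcongr
        exact eVariationOn.edist_le g ⟨hs, le_rfl, hst⟩ ⟨ht, hst, le_rfl⟩
    _ ≤ eVariationOn g (T ∩ Iic s ∪ T ∩ Icc s t) :=
        eVariationOn.add_le_union g fun _ hx _ hy => hx.2.trans hy.2.1
    _ ≤ eVariationOn g (T ∩ Iic t) := by
        refine eVariationOn.mono g (union_subset ?_ ?_)
        · exact inter_subset_inter_right T (Iic_subset_Iic.2 hst)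
        · exact inter_subset_inter_right T Icc_subset_Iic_self

theorem dist_le_variationFunction_sub (hg : eVariationOn g T ≠ ∞) {s t : α} (hs : s ∈ T)
    (ht : t ∈ T) (hst : s ≤ t) :
    dist (g s) (g t) ≤ variationFunction g T t - variationFunction g T s := by
  have hfin : ∀ r, eVariationOn g (T ∩ Iic r) ≠ ∞ :=
    fun r => ne_top_of_le_ne_top hg (eVariationOn.mono g inter_subset_left)
  have h := ENNReal.toReal_mono (hfin t) (eVariationOn_inter_Iic_add_edist_le hs ht hst)
  rw [ENNReal.toReal_add (hfin s) (edist_ne_top _ _), ← dist_edist] at h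
  unfold variationFunction
  linarith

theorem dist_le_abs_variationFunction_sub (hg : eVariationOn g T ≠ ∞) {s t : α} (hs : s ∈ T)
    (ht : t ∈ T) : dist (g s) (g t) ≤ |variationFunction g T s - variationFunction g T t| := by
  rcases le_total s t with hst | hts
  · rw [abs_sub_comm]
    exact (dist_le_variationFunction_sub hg hs ht hst).trans (le_abs_self _)
  · rw [dist_comm]
    exact (dist_le_variationFunction_sub hg ht hs hts).trans (le_abs_self _)

end variationFunction

theorem approxVar_lt_iff {M : Type*} [MetricSpace M] {f : ℝ → M} {T : Set ℝ} {ε : ℝ}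
    {B : ℝ≥0∞} :
    approxVar f T ε < B ↔ ∃ g : ℝ → M, eVariationOn g T < B ∧ ∀ t ∈ T, dist (f t) (g t) ≤ ε := by
  simp only [approxVar, iInf_lt_iff]
  constructor
  · rintro ⟨g, ⟨-, hgf⟩, hgB⟩
    exact ⟨g, hgB, hgf⟩
  · rintro ⟨g, hgB, hgf⟩
    exact ⟨g, ⟨ne_top_of_lt hgB, hgf⟩, hgB⟩

def BVApproximable {M : Type*} [PseudoMetricSpace M] (f : ℕ → ℝ → M) (T : Set ℝ) (ε : ℝ) :
    Prop :=
  ∃ C : ℝ≥0, ∃ g : ℕ → ℝ → M, (∀ n, eVariationOn (g n) T ≤ C) ∧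
    ∀ᶠ n in atTop, ∀ t ∈ T, dist (f n t) (g n t) ≤ ε

theorem bvApproximable_of_limsup_approxVar_lt_top {M : Type*} [MetricSpace M]
    {f : ℕ → ℝ → M} {T : Set ℝ} {ε : ℝ} (h : limsup (fun n => approxVar (f n) T ε) atTop < ∞) :
    BVApproximable f T ε := by
  obtain ⟨C, hlt, hC⟩ := exists_between h
  lift C to ℝ≥0 using hC.ne
  have hg : ∀ n, ∃ g : ℝ → M, eVariationOn g T ≤ C ∧
      (approxVar (f n) T ε < C → ∀ t ∈ T, dist (f n t) (g t) ≤ ε) := by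
    intro n
    by_cases hn : approxVar (f n) T ε < C
    · obtain ⟨g, hgC, hgf⟩ := approxVar_lt_iff.1 hn
      exact ⟨g, hgC.le, fun _ => hgf⟩
    · refine ⟨fun _ => f n 0, ?_, fun h => absurd h hn⟩
      have hconst : ((fun _ => f n 0) '' T).Subsingleton :=
        subsingleton_singleton.anti (image_subset_iff.2 fun _ _ => rfl)
      rw [eVariationOn.constant_on hconst]
      exact zero_le
  choose g hgC hgf using hg
  exact ⟨C, g, hgC, (eventually_lt_of_limsup_lt hlt).mono hgf⟩

theorem BVApproximable.comp_strictMono {M : Type*} [PseudoMetricSpace M] {f : ℕ → ℝ → M}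
    {T : Set ℝ} {ε : ℝ} (h : BVApproximable f T ε) {φ : ℕ → ℕ} (hφ : StrictMono φ) :
    BVApproximable (f ∘ φ) T ε := by
  obtain ⟨C, g, hgC, hfg⟩ := h
  exact ⟨C, g ∘ φ, fun n => hgC (φ n), hφ.tendsto_atTop.eventually hfg⟩

theorem BVApproximable.oscOn_lt_top {M : Type*} [MetricSpace M] {f : ℕ → ℝ → M} {T : Set ℝ}
    {ε : ℝ} (h : BVApproximable f T ε) {F : ℝ → M}
    (hF : ∀ t ∈ T, Tendsto (fun n => f n t) atTop (𝓝 (F t))) : oscOn F T < ∞ := by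
  obtain ⟨C, g, hgC, hfg⟩ := h
  have hF_dist : ∀ s ∈ T, ∀ t ∈ T, dist (F s) (F t) ≤ ε + C + ε := by
    intro s hs t ht
    refine le_of_tendsto ((hF s hs).dist (hF t ht)) ?_
    filter_upwards [hfg] with n hn
    have hg : dist (g n s) (g n t) ≤ C := by
      rw [dist_nndist, NNReal.coe_le_coe, ← edist_le_coe]
      exact (eVariationOn.edist_le _ hs ht).trans (hgC n)
    calc dist (f n s) (f n t)
          ≤ dist (f n s) (g n s) + dist (g n s) (g n t) + dist (g n t) (f n t) :=
          dist_triangle4 _ _ _ _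
      _ ≤ ε + C + ε := by
          rw [dist_comm (g n t)]
          gcongr
          exacts [hn s hs, hn t ht]
  refine lt_of_le_of_lt (b := ENNReal.ofReal (ε + C + ε)) ?_ ENNReal.ofReal_lt_top
  refine iSup₂_le fun s hs => iSup₂_le fun t ht => ?_
  rw [edist_dist]
  exact ENNReal.ofReal_le_ofReal (hF_dist s hs t ht)

section selection

variable {M : Type*} [PseudoMetricSpace M] {f : ℕ → ℝ → M} {T : Set ℝ}

theorem exists_strictMono_forall_cauchySeq
    (hcpt : ∀ t ∈ T, IsCompact (closure (range fun n => f n t)))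
    (happrox : ∀ ε > 0, BVApproximable f T ε) :
    ∃ φ : ℕ → ℕ, StrictMono φ ∧ ∀ t ∈ T, CauchySeq fun n => f (φ n) t := by
  choose C g hgC hfg using fun k : ℕ => happrox (1 / (k + 1)) Nat.one_div_pos_of_nat
  have hg : ∀ k n, eVariationOn (g k n) T ≠ ∞ :=
    fun k n => ne_top_of_le_ne_top ENNReal.coe_ne_top (hgC k n)
  obtain ⟨φ₁, hφ₁, hv⟩ := exists_strictMono_forall_tendsto_of_monotone
    (fun n k => variationFunction (g k n) T) (fun n k => monotone_variationFunction (hg k n))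
    (fun k => C k) fun n k t =>
      (abs_variationFunction_le (hg k n) t).trans (ENNReal.toReal_le_coe_of_le_coe (hgC k n))
  choose V hV using hv
  obtain ⟨S, hST, hSc, hS⟩ := exists_countable_subset_forall_image_subset_closure V T
  have := hSc.to_subtype
  obtain ⟨φ₂, hφ₂, hfS⟩ := exists_strictMono_forall_tendsto_of_mem_isCompact
    (fun n (s : S) => f (φ₁ n) s) (fun s => hcpt s (hST s.2))
    fun n s => subset_closure (mem_range_self _)
  refine ⟨φ₁ ∘ φ₂, hφ₁.comp hφ₂, fun t ht => cauchySeq_of_forall_eventually_dist_lt fun η hη => ?_⟩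
  obtain ⟨k, hk⟩ := exists_nat_one_div_lt (by positivity : 0 < η / 3)
  obtain ⟨_, ⟨s, hs, rfl⟩, hVts⟩ :=
    Metric.mem_closure_iff.1 (hS k (mem_image_of_mem _ ht)) (η / 3) (by positivity)
  obtain ⟨a, ha⟩ := hfS ⟨s, hs⟩
  refine ⟨fun n => f (φ₁ (φ₂ n)) s, ha.cauchySeq, ?_⟩
  rw [Real.dist_eq] at hVts
  filter_upwards [(hφ₁.comp hφ₂).tendsto_atTop.eventually (hfg k),
    (((hV k t).sub (hV k s)).abs.comp hφ₂.tendsto_atTop).eventually (gt_mem_nhds hVts)]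
    with n hfgn hvn
  set m := φ₁ (φ₂ n)
  set v := variationFunction (g k m) T
  calc dist (f m t) (f m s)
      ≤ dist (f m t) (g k m t) + dist (g k m t) (g k m s) + dist (g k m s) (f m s) :=
        dist_triangle4 _ _ _ _
    _ ≤ 1 / (k + 1) + |v t - v s| + 1 / (k + 1) := by
        rw [dist_comm (g k m s)]
        gcongr
        exacts [hfgn t ht, dist_le_abs_variationFunction_sub (hg k m) ht (hST hs), hfgn s (hST hs)]
    _ < η := by
        have : |v t - v s| < η / 3 := hvn
        linarith

theorem exists_strictMono_forall_tendsto
    (hcpt : ∀ t ∈ T, IsCompact (closure (range fun n => f n t)))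
    (happrox : ∀ ε > 0, BVApproximable f T ε) :
    ∃ φ : ℕ → ℕ, StrictMono φ ∧
      ∃ F : ℝ → M, ∀ t ∈ T, Tendsto (fun n => f (φ n) t) atTop (𝓝 (F t)) := by
  obtain ⟨φ, hφ, hcauchy⟩ := exists_strictMono_forall_cauchySeq hcpt happrox
  have hlim : ∀ t, ∃ a, t ∈ T → Tendsto (fun n => f (φ n) t) atTop (𝓝 a) := by
    intro t
    by_cases ht : t ∈ T
    · obtain ⟨a, -, ha⟩ := cauchySeq_tendsto_of_isComplete (hcpt t ht).isComplete
        (fun n => subset_closure (mem_range_self _)) (hcauchy t ht)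
      exact ⟨a, fun _ => ha⟩
    · exact ⟨f 0 t, fun h => absurd h ht⟩
  choose F hF using hlim
  exact ⟨φ, hφ, F, fun t ht => hF t ht⟩

end selection

theorem pointwise_selection_principle_general {M : Type*} [MetricSpace M]
    (T : Set ℝ) (fj : ℕ → ℝ → M)
    (hcpt : ∀ t ∈ T, IsCompact (closure (Set.range fun j => fj j t)))
    (hvar : ∀ ε : ℝ, 0 < ε →
      Filter.limsup (fun j => approxVar (fj j) T ε) Filter.atTop < ⊤) :
    ∃ φ : ℕ → ℕ, StrictMono φ ∧ ∃ f : ℝ → M,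
      (∀ t ∈ T, Tendsto (fun k => fj (φ k) t) atTop (𝓝 (f t))) ∧ oscOn f T < ⊤ := by
  have happrox : ∀ ε > 0, BVApproximable fj T ε :=
    fun ε hε => bvApproximable_of_limsup_approxVar_lt_top (hvar ε hε)
  obtain ⟨φ, hφ, f, hf⟩ := exists_strictMono_forall_tendsto hcpt happrox
  exact ⟨φ, hφ, f, hf, ((happrox 1 one_pos).comp_strictMono hφ).oscOn_lt_top hf⟩

theorem pointwise_selection_principle {M : Type*} [MetricSpace M]
    (T : Set ℝ) (hT : T.Nonempty) (fj : ℕ → ℝ → M)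
    (hcpt : ∀ t ∈ T, IsCompact (closure (Set.range fun j => fj j t)))
    (hvar : ∀ ε : ℝ, 0 < ε →
      Filter.limsup (fun j => approxVar (fj j) T ε) Filter.atTop < ⊤) :
    ∃ φ : ℕ → ℕ, StrictMono φ ∧ ∃ f : ℝ → M,
      (∀ t ∈ T, Tendsto (fun k => fj (φ k) t) atTop (𝓝 (f t))) ∧ oscOn f T < ⊤ :=
  pointwise_selection_principle_general T fj hcpt hvar
end
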